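/- arXiv:1806.05322 — 2 statements merged into one kernel-verified Lean document; each statement's English description precedes it below -/
import Mathlib

section
/- Let (H(m))_{m∈ℕ} be a family of compact operators from F^n(ℝⁿ) to F^n(𝓗) converging in operator norm to the Hankel operator H, whose singular values are all nonzero and non-degenerate (all eigenspaces of HH* and H*H are one-dimensional). Let H = Σ_k σ_k ⟨·,e_k⟩ f_k and H(m) = Σ_k σ_k(m) ⟨·,e_k(m)⟩ f_k(m) be singular value decompositions with singular values ordered decreasingly. Then the singular vectors converge in norm: for each j, writing e_j = r(m) e_j(m) + x_j(m) with ⟨e_j(m), x_j(m)⟩ = 0, one has ‖x_j(m)‖² ≤ (σ_j² − (σ_j − 2‖H_j − H_j(m)‖)²)/(σ_j² − σ_{j+1}²) → 0 as m → ∞, where H_j := H − Σ_{k<j} σ_k ⟨·,e_k⟩ f_k and H_j(m) := H(m) − Σ_{k<j} σ_k(m) ⟨·,e_k(m)⟩ f_k(m); the analogous statement holds for the vectors f_j. -/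
open MeasureTheory ContinuousLinearMap Filter
open scoped ENNReal NNReal Topology RealInnerProductSpace

noncomputable section

/-- The open positive orthant `(0,∞)^m`. -/
def posOrthant (m : ℕ) : Set (Fin m → ℝ) := {t | ∀ i, 0 < t i}

/-- Lebesgue measure restricted to the positive orthant. -/
def orthantMeasure (m : ℕ) : Measure (Fin m → ℝ) := volume.restrict (posOrthant m)

/-- Hilbert-space model of the tensor product `H ⊗ (ℝⁿ)^{⊗ k}`:
functions from multi-indices to `H`, with the `ℓ²` norm. -/
abbrev Tens (H : Type*) [NormedAddCommGroup H] [InnerProductSpace ℝ H] (n k : ℕ) :=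
  PiLp 2 (fun _ : Fin k → Fin n => H)

instance Tens.instCompleteSpace {H : Type*} [NormedAddCommGroup H] [InnerProductSpace ℝ H]
    [CompleteSpace H] (n k : ℕ) : CompleteSpace (Tens H n k) :=
  inferInstanceAs (CompleteSpace (PiLp 2 (fun _ : Fin k → Fin n => H)))

section norms

variable {X Y : Type*} [NormedAddCommGroup X] [InnerProductSpace ℝ X]
  [NormedAddCommGroup Y] [InnerProductSpace ℝ Y]

/-- Trace (nuclear) norm of an operator between real inner-product spaces: the supremum
over finite orthonormal systems `(e_i)`, `(f_i)` of `∑ i |⟨f_i, T e_i⟩|`. -/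
def traceNorm (T : X →L[ℝ] Y) : ℝ≥0∞ :=
  ⨆ (m : ℕ) (e : {e : Fin m → X // Orthonormal ℝ e}) (f : {f : Fin m → Y // Orthonormal ℝ f}),
    ∑ i, (‖(inner ℝ (f.1 i) (T (e.1 i)) : ℝ)‖₊ : ℝ≥0∞)

/-- Square of the Hilbert–Schmidt norm, as a supremum over finite orthonormal systems. -/
def hsNormSq (T : X →L[ℝ] Y) : ℝ≥0∞ :=
  ⨆ (m : ℕ) (e : {e : Fin m → X // Orthonormal ℝ e}), ∑ i, (‖T (e.1 i)‖₊ : ℝ≥0∞) ^ 2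

/-- Hilbert–Schmidt norm. -/
def hsNorm (T : X →L[ℝ] Y) : ℝ≥0∞ := hsNormSq T ^ (1 / 2 : ℝ)

/-- A bounded operator is trace class if its trace norm is finite. -/
def IsTraceClass (T : X →L[ℝ] Y) : Prop := traceNorm T < ⊤

/-- A bounded operator is Hilbert–Schmidt if its Hilbert–Schmidt norm is finite. -/
def IsHilbertSchmidt (T : X →L[ℝ] Y) : Prop := hsNormSq T < ⊤

/-- The `i`-th singular value of an operator between Hilbert spaces, defined as its `i`-th
approximation number (the distance, in operator norm, to operators of rank at most `i`). -/
def singularValue (i : ℕ) (T : X →L[ℝ] Y) : ℝ :=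
  ⨅ S : {S : X →L[ℝ] Y // Module.rank ℝ (LinearMap.range (S : X →ₗ[ℝ] Y)) ≤ i}, ‖T - S.1‖

end norms

section system

variable {X H : Type*} [NormedAddCommGroup X] [InnerProductSpace ℝ X] [CompleteSpace X]
  [NormedAddCommGroup H] [InnerProductSpace ℝ H] [CompleteSpace H] {n : ℕ}

/-- An exponentially stable `C₀`-semigroup satisfying `‖T(t)‖ ≤ M e^{-ν t}`. -/
def IsC0SemigroupWith (T : ℝ → X →L[ℝ] X) (M ν : ℝ) : Prop :=
  1 ≤ M ∧ 0 < ν ∧ T 0 = 1 ∧ (∀ s t : ℝ, 0 ≤ s → 0 ≤ t → T (s + t) = T s * T t) ∧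
    (∀ x : X, ContinuousOn (fun t => T t x) (Set.Ici (0 : ℝ))) ∧
    (∀ t : ℝ, 0 ≤ t → ‖T t‖ ≤ M * Real.exp (-ν * t))

/-- `Γ² = ∑ᵢ ‖Nᵢ Nᵢ^*‖`. -/
def gammaSq (N : Fin n → X →L[ℝ] X) : ℝ := ∑ i, ‖N i * adjoint (N i)‖

/-- The stability condition `M² Γ² (2ν)⁻¹ < 1`. -/
def StabilityCond (N : Fin n → X →L[ℝ] X) (M ν : ℝ) : Prop :=
  M ^ 2 * gammaSq N / (2 * ν) < 1

/-- The operator chain `T(t₀) N_{α 0} T(t₁) ⋯ N_{α (k-1)} T(t_k)`. -/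
def Ochain (T : ℝ → X →L[ℝ] X) (N : Fin n → X →L[ℝ] X) {k : ℕ}
    (t : Fin (k + 1) → ℝ) (α : Fin k → Fin n) : X →L[ℝ] X :=
  T (t 0) * (List.ofFn fun l : Fin k => N (α l) * T (t l.succ)).prod

/-- The adjoint operator chain `T(t₀)^* N_{α 0}^* T(t₁)^* ⋯ N_{α (k-1)}^* T(t_k)^*`. -/
def Pchain (T : ℝ → X →L[ℝ] X) (N : Fin n → X →L[ℝ] X) {k : ℕ}
    (t : Fin (k + 1) → ℝ) (α : Fin k → Fin n) : X →L[ℝ] X :=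
  (List.ofFn fun l : Fin k => adjoint (T (t l.castSucc)) * adjoint (N (α l))).prod *
    adjoint (T (t (Fin.last k)))

/-- The kernel `O_k(t)` of the observability map: the component at the multi-index
`α = (n₁,…,n_k)` is `C T(t₀) N_{n₁} T(t₁) ⋯ N_{n_k} T(t_k)`. -/
def Ok (T : ℝ → X →L[ℝ] X) (N : Fin n → X →L[ℝ] X) (C : X →L[ℝ] H) (k : ℕ)
    (t : Fin (k + 1) → ℝ) : X →L[ℝ] Tens H n k :=
  (PiLp.continuousLinearEquiv 2 ℝ _).symm.toContinuousLinearMap.comp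
    (ContinuousLinearMap.pi fun α : Fin k → Fin n => C.comp (Ochain T N t α))

/-- The kernel `P_k(t)` of the reachability map: the component at the multi-index
`α = (n₁,…,n_k)` is `T(t₀)^* N_{n₁}^* T(t₁)^* ⋯ N_{n_k}^* T(t_k)^*`. -/
def Pk (T : ℝ → X →L[ℝ] X) (N : Fin n → X →L[ℝ] X) (k : ℕ)
    (t : Fin (k + 1) → ℝ) : X →L[ℝ] Tens X n k :=
  (PiLp.continuousLinearEquiv 2 ℝ _).symm.toContinuousLinearMap.comp
    (ContinuousLinearMap.pi fun α : Fin k → Fin n => Pchain T N t α)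

/-- `B ⊗ id_{(ℝⁿ)^{⊗k}}` in the tensor model. -/
def tensMap {E F : Type*} [NormedAddCommGroup E] [InnerProductSpace ℝ E]
    [NormedAddCommGroup F] [InnerProductSpace ℝ F] (B : E →L[ℝ] F) (n k : ℕ) :
    Tens E n k →L[ℝ] Tens F n k :=
  (PiLp.continuousLinearEquiv 2 ℝ _).symm.toContinuousLinearMap.comp
    ((ContinuousLinearMap.pi fun α : Fin k → Fin n =>
      B.comp (ContinuousLinearMap.proj α)).comp
        (PiLp.continuousLinearEquiv 2 ℝ _).toContinuousLinearMap)

/-- The control operator `B : ℝⁿ → X`, `Bu = ∑ᵢ uᵢ ψᵢ`. -/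
def Bop (ψ : Fin n → X) : EuclideanSpace ℝ (Fin n) →L[ℝ] X :=
  LinearMap.toContinuousLinearMap
    { toFun := fun u => ∑ i, u i • ψ i
      map_add' := by
        intro u v
        simp [add_smul, Finset.sum_add_distrib]
      map_smul' := by
        intro c u
        simp [smul_smul, Finset.smul_sum] }

/-- The fibre `F^n_{k+1}(H) = L²((0,∞)^{k+1}, H ⊗ (ℝⁿ)^{⊗k})` of the Fock space. -/
abbrev FockFiber (H : Type*) [NormedAddCommGroup H] [InnerProductSpace ℝ H] (n k : ℕ) :=
  MeasureTheory.Lp (α := Fin (k + 1) → ℝ) (Tens H n k) 2 (orthantMeasure (k + 1))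

/-- The Fock space `F^n(H) = ⊕_{k ≥ 0} F^n_{k+1}(H)` (Hilbert direct sum). -/
abbrev Fock (H : Type*) [NormedAddCommGroup H] [InnerProductSpace ℝ H] (n : ℕ) :=
  lp (fun k : ℕ => FockFiber H n k) 2

/-- `(W_k)` is the family of observability blocks: `W_k x = O_k(·) x` a.e. on the orthant. -/
def IsObsBlocks (T : ℝ → X →L[ℝ] X) (N : Fin n → X →L[ℝ] X) (C : X →L[ℝ] H)
    (Wk : ∀ k : ℕ, X →L[ℝ] FockFiber H n k) : Prop :=
  ∀ (k : ℕ) (x : X), ∀ᵐ t ∂(orthantMeasure (k + 1)),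
    (Wk k x : (Fin (k + 1) → ℝ) → Tens H n k) t = Ok T N C k t x

/-- `W` is the observability map assembled from the blocks `W_k`. -/
def IsObsMap (Wk : ∀ k : ℕ, X →L[ℝ] FockFiber H n k) (W : X →L[ℝ] Fock H n) : Prop :=
  ∀ (x : X) (k : ℕ), (W x : ∀ k, FockFiber H n k) k = Wk k x

/-- `(R_k)` is the family of reachability blocks: `R_k f = ∫ P_k(t)^* (B ⊗ id) f(t) dt`. -/
def IsReachBlocks (T : ℝ → X →L[ℝ] X) (N : Fin n → X →L[ℝ] X) (ψ : Fin n → X)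
    (Rk : ∀ k : ℕ, FockFiber (EuclideanSpace ℝ (Fin n)) n k →L[ℝ] X) : Prop :=
  ∀ (k : ℕ) (f : FockFiber (EuclideanSpace ℝ (Fin n)) n k),
    Rk k f = ∫ t, adjoint (Pk T N k t) (tensMap (Bop ψ) n k (f t)) ∂(orthantMeasure (k + 1))

/-- `R` is the reachability map assembled from the blocks `R_k`. -/
def IsReachMap (Rk : ∀ k : ℕ, FockFiber (EuclideanSpace ℝ (Fin n)) n k →L[ℝ] X)
    (R : Fock (EuclideanSpace ℝ (Fin n)) n →L[ℝ] X) : Prop :=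
  ∀ f : Fock (EuclideanSpace ℝ (Fin n)) n,
    R f = ∑' k : ℕ, Rk k ((f : ∀ k, FockFiber (EuclideanSpace ℝ (Fin n)) n k) k)

end system

/-!
Removing the first `j` singular terms of an operator leaves an operator whose singular system is
the original one shifted by `j`, so every estimate reduces to the top singular vector. For two
singular systems with `δ = ‖A - A'‖`, write `e₀ = r e'₀ + x` with `x ⟂ e'₀`. Then
`σ₀ - δ ≤ ‖A' e₀‖`, and Pythagoras together with the Weyl-type bounds `σ'ₖ ≤ σₖ + δ` (`k = 0, 1`)
gives `‖A' e₀‖² ≤ (σ₀ + δ)² r² + (σ₁ + δ)² ‖x‖²`; with `r² = 1 - ‖x‖²` this is the stated bound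
on `‖x‖²`. Convergence propagates from `j` to `j + 1` because `A_{j+1} = A_j (1 - P_{e_j})` with
`P_u` the projection onto `u`, and `‖P_u - P_v‖ ≤ 2 ‖u - ⟪v, u⟫ v‖`. The vectors `f_j` are the
`e_j` of the adjoints. Compactness of `H(m)` is what makes its decreasing singular values
nonnegative: otherwise `H(m)` would map an orthonormal sequence to a separated one.
-/

open InnerProductSpace

theorem mul_sq_sub_sq_le_of_sq_sub_le {a b δ t : ℝ} (hb : 0 ≤ b) (hab : b < a) (hδ0 : 0 ≤ δ)
    (hδ : 2 * δ ≤ a - b) (h : (a - δ) ^ 2 ≤ (a + δ) ^ 2 * (1 - t) + (b + δ) ^ 2 * t) :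
    t * (a ^ 2 - b ^ 2) ≤ a ^ 2 - (a - 2 * δ) ^ 2 := by
  have hP : t * ((a - b) * (a + b + 2 * δ)) ≤ 4 * a * δ := by nlinarith
  refine le_of_mul_le_mul_right ?_ (by linarith : 0 < a + b + 2 * δ)
  nlinarith [mul_le_mul_of_nonneg_right hP (by linarith : 0 ≤ a + b),
    mul_nonneg (mul_nonneg hδ0 hδ0) (by linarith : 0 ≤ a - b - 2 * δ)]

section Hilbert

variable {E F : Type*} [NormedAddCommGroup E] [InnerProductSpace ℝ E]
  [NormedAddCommGroup F] [InnerProductSpace ℝ F]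

namespace Orthonormal

variable {f : ℕ → F} {c : ℕ → ℝ} {y : F}

theorem inner_eq_of_hasSum (hf : Orthonormal ℝ f) (h : HasSum (fun k => c k • f k) y)
    (i : ℕ) : ⟪f i, y⟫ = c i := by
  refine ((innerSL ℝ (f i)).hasSum h).unique ((hasSum_ite_eq i (c i)).congr_fun fun k => ?_)
  rw [innerSL_apply_apply, real_inner_smul_right, orthonormal_iff_ite.mp hf]
  split_ifs <;> simp_all [eq_comm]

theorem hasSum_sq_of_hasSum (hf : Orthonormal ℝ f) (h : HasSum (fun k => c k • f k) y) :
    HasSum (fun k => c k ^ 2) (‖y‖ ^ 2) := by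
  rw [← real_inner_self_eq_norm_sq]
  refine ((innerSL ℝ y).hasSum h).congr_fun fun k => ?_
  rw [innerSL_apply_apply, real_inner_smul_right, real_inner_comm, hf.inner_eq_of_hasSum h, sq]

theorem summable_smul [CompleteSpace F] (hf : Orthonormal ℝ f)
    (hc : Summable fun k => c k ^ 2) : Summable fun k => c k • f k :=
  (hf.orthogonalFamily.summable_iff_norm_sq_summable c).mpr (by simpa using hc)

theorem summable_inner_sq (hf : Orthonormal ℝ f) (y : F) : Summable fun k => ⟪f k, y⟫ ^ 2 := by
  simpa [sq_abs] using hf.inner_products_summable (x := y)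

theorem tsum_inner_sq_le (hf : Orthonormal ℝ f) (y : F) : ∑' k, ⟪f k, y⟫ ^ 2 ≤ ‖y‖ ^ 2 := by
  simpa [sq_abs] using hf.tsum_inner_products_le (x := y)

theorem apply_eq_of_hasSum {e : ℕ → E} {T : E →L[ℝ] F} (he : Orthonormal ℝ e)
    (hT : ∀ g, HasSum (fun k => c k • ⟪e k, g⟫ • f k) (T g)) (i : ℕ) : T (e i) = c i • f i := by
  refine (hT (e i)).unique ((hasSum_ite_eq i (c i • f i)).congr_fun fun k => ?_)
  rw [orthonormal_iff_ite.mp he]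
  split_ifs <;> simp_all

theorem norm_smul_add_smul_sq (hf : Orthonormal ℝ f) {i j : ℕ} (hij : i ≠ j) (a b : ℝ) :
    ‖a • f i + b • f j‖ ^ 2 = a ^ 2 + b ^ 2 := by
  rw [@norm_add_sq_real, real_inner_smul_left, real_inner_smul_right, hf.2 hij, norm_smul,
    norm_smul, hf.1, hf.1]
  simp [sq_abs]

theorem not_forall_smul_mem (hf : Orthonormal ℝ f) {ε : ℝ} (hε : 0 < ε) (hc : ∀ k, ε ≤ |c k|)
    {K : Set F} (hK : IsCompact K) : ¬ ∀ k, c k • f k ∈ K := by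
  intro hmem
  obtain ⟨_, -, φ, hφ, hlim⟩ := hK.tendsto_subseq hmem
  obtain ⟨N, hN⟩ := Metric.cauchySeq_iff'.mp hlim.cauchySeq ε hε
  have hne : φ (N + 1) ≠ φ N := (hφ N.lt_succ_self).ne'
  have hdist : dist (c (φ (N + 1)) • f (φ (N + 1))) (c (φ N) • f (φ N)) ^ 2 =
      c (φ (N + 1)) ^ 2 + c (φ N) ^ 2 := by
    rw [dist_eq_norm, @norm_sub_sq_real, norm_smul, norm_smul, hf.1, hf.1,
      real_inner_smul_left, real_inner_smul_right, hf.2 hne]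
    simp [sq_abs]
  have hclose : dist (c (φ (N + 1)) • f (φ (N + 1))) (c (φ N) • f (φ N)) < ε :=
    hN (N + 1) N.le_succ
  have hfar : ε ^ 2 ≤ c (φ N) ^ 2 := by
    simpa [sq_abs] using pow_le_pow_left₀ hε.le (hc (φ N)) 2
  nlinarith [dist_nonneg (x := c (φ (N + 1)) • f (φ (N + 1))) (y := c (φ N) • f (φ N))]

end Orthonormal

theorem norm_sub_inner_smul_sq {u v : E} (hv : ‖v‖ = 1) :
    ‖u - ⟪v, u⟫ • v‖ ^ 2 = ‖u‖ ^ 2 - ⟪v, u⟫ ^ 2 := by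
  rw [@norm_sub_sq_real, norm_smul, hv, real_inner_smul_right, real_inner_comm, Real.norm_eq_abs,
    mul_one, sq_abs]
  ring

theorem norm_sub_inner_smul_comm {u v : E} (hu : ‖u‖ = 1) (hv : ‖v‖ = 1) :
    ‖v - ⟪u, v⟫ • u‖ = ‖u - ⟪v, u⟫ • v‖ := by
  rw [← sq_eq_sq₀ (norm_nonneg _) (norm_nonneg _), norm_sub_inner_smul_sq hu,
    norm_sub_inner_smul_sq hv, hu, hv, real_inner_comm]

theorem norm_rankOne_self_sub_le {u v : E} (hu : ‖u‖ = 1) (hv : ‖v‖ = 1) :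
    ‖rankOne ℝ u u - rankOne ℝ v v‖ ≤ 2 * ‖u - ⟪v, u⟫ • v‖ := by
  have hsplit : rankOne ℝ u u - rankOne ℝ v v =
      rankOne ℝ u (u - ⟪v, u⟫ • v) - rankOne ℝ (v - ⟪u, v⟫ • u) v := by
    ext g
    simp only [sub_apply, rankOne_apply, map_sub, map_smul, real_inner_comm u v]
    module
  calc ‖rankOne ℝ u u - rankOne ℝ v v‖
      ≤ ‖rankOne ℝ u (u - ⟪v, u⟫ • v)‖ + ‖rankOne ℝ (v - ⟪u, v⟫ • u) v‖ :=
        hsplit ▸ norm_sub_le _ _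
    _ = 2 * ‖u - ⟪v, u⟫ • v‖ := by
        rw [norm_rankOne, norm_rankOne, hu, hv, norm_sub_inner_smul_comm hu hv]; ring


theorem ContinuousLinearMap.norm_apply_le_add (T T' : E →L[ℝ] F) (g : E) :
    ‖T g‖ ≤ ‖T' g‖ + ‖T - T'‖ * ‖g‖ :=
  calc ‖T g‖ ≤ ‖T' g‖ + ‖T g - T' g‖ := norm_le_norm_add_norm_sub' _ _
    _ ≤ ‖T' g‖ + ‖T - T'‖ * ‖g‖ := add_le_add_right ((T - T').le_opNorm g) _

theorem exists_inner_smul_add_smul_eq_zero (z u v : E) :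
    ∃ a b : ℝ, (a ≠ 0 ∨ b ≠ 0) ∧ ⟪z, a • u + b • v⟫ = 0 := by
  by_cases hu : ⟪z, u⟫ = 0
  · exact ⟨1, 0, Or.inl one_ne_zero, by simp [hu]⟩
  · refine ⟨⟪z, v⟫, -⟪z, u⟫, Or.inr (neg_ne_zero.mpr hu), ?_⟩
    rw [inner_add_right, real_inner_smul_right, real_inner_smul_right]
    ring

structure IsSingularSystem (T : E →L[ℝ] F) (σ : ℕ → ℝ) (e : ℕ → E) (f : ℕ → F) : Prop where
  orthonormal_left : Orthonormal ℝ e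
  orthonormal_right : Orthonormal ℝ f
  antitone : Antitone σ
  nonneg : ∀ k, 0 ≤ σ k
  hasSum : ∀ g, HasSum (fun k => σ k • ⟪e k, g⟫ • f k) (T g)

def svdTail (T : E →L[ℝ] F) (σ : ℕ → ℝ) (e : ℕ → E) (f : ℕ → F) (j : ℕ) : E →L[ℝ] F :=
  T - ∑ k ∈ Finset.range j, σ k • rankOne ℝ (f k) (e k)

theorem svdTail_zero (T : E →L[ℝ] F) (σ : ℕ → ℝ) (e : ℕ → E) (f : ℕ → F) :
    svdTail T σ e f 0 = T := by
  simp [svdTail]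

theorem adjoint_svdTail [CompleteSpace E] [CompleteSpace F] (T : E →L[ℝ] F) (σ : ℕ → ℝ)
    (e : ℕ → E) (f : ℕ → F) (j : ℕ) :
    adjoint (svdTail T σ e f j) = svdTail (adjoint T) σ f e j := by
  simp [svdTail, map_sub, map_sum, adjoint_rankOne]

namespace IsSingularSystem

variable {T T' : E →L[ℝ] F} {σ σ' : ℕ → ℝ} {e e' : ℕ → E} {f f' : ℕ → F}

theorem apply_eq (h : IsSingularSystem T σ e f) (i : ℕ) : T (e i) = σ i • f i :=
  h.orthonormal_left.apply_eq_of_hasSum h.hasSum i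

theorem hasSum_sq_norm (h : IsSingularSystem T σ e f) (g : E) :
    HasSum (fun k => (σ k * ⟪e k, g⟫) ^ 2) (‖T g‖ ^ 2) :=
  h.orthonormal_right.hasSum_sq_of_hasSum ((h.hasSum g).congr_fun fun k => by rw [smul_smul])

theorem norm_apply_le (h : IsSingularSystem T σ e f) (g : E) : ‖T g‖ ≤ σ 0 * ‖g‖ := by
  have hσ0 := h.nonneg 0
  refine le_of_sq_le_sq ?_ (by positivity)
  calc ‖T g‖ ^ 2 = ∑' k, (σ k * ⟪e k, g⟫) ^ 2 := (h.hasSum_sq_norm g).tsum_eq.symm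
    _ ≤ ∑' k, σ 0 ^ 2 * ⟪e k, g⟫ ^ 2 := by
        refine (h.hasSum_sq_norm g).summable.tsum_le_tsum (fun k => ?_)
          ((h.orthonormal_left.summable_inner_sq g).mul_left _)
        rw [mul_pow]
        gcongr
        exacts [h.nonneg k, h.antitone k.zero_le]
    _ ≤ (σ 0 * ‖g‖) ^ 2 := by
        rw [tsum_mul_left, mul_pow]
        gcongr
        exact h.orthonormal_left.tsum_inner_sq_le g

theorem norm_apply_eq (h : IsSingularSystem T σ e f) (i : ℕ) : ‖T (e i)‖ = σ i := by
  rw [h.apply_eq, norm_smul, h.orthonormal_right.1, mul_one, Real.norm_of_nonneg (h.nonneg i)]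

theorem tail (h : IsSingularSystem T σ e f) (j : ℕ) :
    IsSingularSystem (svdTail T σ e f j) (fun k => σ (j + k)) (fun k => e (j + k))
      (fun k => f (j + k)) where
  orthonormal_left := h.orthonormal_left.comp _ (add_right_injective j)
  orthonormal_right := h.orthonormal_right.comp _ (add_right_injective j)
  antitone := h.antitone.comp_monotone fun _ _ hab => Nat.add_le_add_left hab j
  nonneg k := h.nonneg (j + k)
  hasSum g := by
    have := (hasSum_nat_add_iff' j).mpr (h.hasSum g)
    simpa [svdTail, add_comm j] using this

theorem norm_apply_le_of_inner_eq_zero (h : IsSingularSystem T σ e f) {g : E}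
    (hg : ⟪e 0, g⟫ = 0) : ‖T g‖ ≤ σ 1 * ‖g‖ := by
  simpa [svdTail, hg] using (h.tail 1).norm_apply_le g

theorem comp_rankOne_self (h : IsSingularSystem T σ e f) (i : ℕ) :
    T ∘L rankOne ℝ (e i) (e i) = σ i • rankOne ℝ (f i) (e i) := by
  rw [comp_rankOne, h.apply_eq, map_smul, smul_apply]

theorem svdTail_succ (h : IsSingularSystem T σ e f) (j : ℕ) :
    svdTail T σ e f (j + 1) = svdTail T σ e f j - svdTail T σ e f j ∘L rankOne ℝ (e j) (e j) := by
  have hcomp := (h.tail j).comp_rankOne_self 0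
  simp only [add_zero] at hcomp
  rw [hcomp]
  simp [svdTail, Finset.sum_range_succ, sub_sub]

theorem norm_apply_smul_add_smul_sq (h : IsSingularSystem T σ e f) (a b : ℝ) :
    ‖T (a • e 0 + b • e 1)‖ ^ 2 = (σ 0 * a) ^ 2 + (σ 1 * b) ^ 2 := by
  rw [map_add, map_smul, map_smul, h.apply_eq, h.apply_eq, smul_smul, smul_smul,
    h.orthonormal_right.norm_smul_add_smul_sq zero_ne_one, mul_comm a, mul_comm b]

theorem adjoint [CompleteSpace E] [CompleteSpace F] (h : IsSingularSystem T σ e f) :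
    IsSingularSystem (adjoint T) σ f e where
  orthonormal_left := h.orthonormal_right
  orthonormal_right := h.orthonormal_left
  antitone := h.antitone
  nonneg := h.nonneg
  hasSum g := by
    have hsq : Summable fun k => (σ k * ⟪f k, g⟫) ^ 2 := by
      refine Summable.of_nonneg_of_le (fun k => sq_nonneg _) (fun k => ?_)
        ((h.orthonormal_right.summable_inner_sq g).mul_left (σ 0 ^ 2))
      rw [mul_pow]
      gcongr
      exacts [h.nonneg k, h.antitone k.zero_le]
    obtain ⟨y, hy⟩ := h.orthonormal_left.summable_smul hsq
    have hyT : y = ContinuousLinearMap.adjoint T g := by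
      refine ext_inner_left ℝ fun v => ?_
      rw [adjoint_inner_right, real_inner_comm g]
      refine ((innerSL ℝ v).hasSum hy).unique (((innerSL ℝ g).hasSum (h.hasSum v)).congr_fun
        fun k => ?_)
      simp only [innerSL_apply_apply, real_inner_smul_right, real_inner_comm v, real_inner_comm g]
      ring
    simpa [hyT, smul_smul] using hy

theorem inner_apply (h : IsSingularSystem T σ e f) (i : ℕ) (g : E) :
    ⟪f i, T g⟫ = σ i * ⟪e i, g⟫ :=
  h.orthonormal_right.inner_eq_of_hasSum ((h.hasSum g).congr_fun fun k => by rw [smul_smul]) i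

theorem sub_le_norm_apply (h : IsSingularSystem T σ e f) (T' : E →L[ℝ] F) :
    σ 0 - ‖T - T'‖ ≤ ‖T' (e 0)‖ := by
  have := T.norm_apply_le_add T' (e 0)
  rw [h.norm_apply_eq, h.orthonormal_left.1, mul_one] at this
  linarith

theorem sigma_zero_le_add (h : IsSingularSystem T σ e f) (h' : IsSingularSystem T' σ' e' f') :
    σ' 0 ≤ σ 0 + ‖T - T'‖ := by
  have := T'.norm_apply_le_add T (e' 0)
  rw [h'.norm_apply_eq, h'.orthonormal_left.1, mul_one, norm_sub_rev] at this
  have hT := h.norm_apply_le (e' 0)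
  rw [h'.orthonormal_left.1, mul_one] at hT
  linarith

theorem sigma_one_le_add (h : IsSingularSystem T σ e f) (h' : IsSingularSystem T' σ' e' f') :
    σ' 1 ≤ σ 1 + ‖T - T'‖ := by
  -- min-max: test `T'` on a nonzero `w ∈ span {e' 0, e' 1}` orthogonal to `e 0`
  obtain ⟨a, b, hab, hw⟩ := exists_inner_smul_add_smul_eq_zero (e 0) (e' 0) (e' 1)
  set w := a • e' 0 + b • e' 1
  have hw2 : ‖w‖ ^ 2 = a ^ 2 + b ^ 2 := h'.orthonormal_left.norm_smul_add_smul_sq zero_ne_one a b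
  have hwpos : 0 < ‖w‖ := by
    have : 0 < ‖w‖ ^ 2 := by
      rw [hw2]
      rcases hab with ha | hb <;> positivity
    exact (norm_nonneg w).lt_of_ne' (sq_pos_iff.mp this)
  have hlow : (σ' 1 * ‖w‖) ^ 2 ≤ ‖T' w‖ ^ 2 := by
    rw [h'.norm_apply_smul_add_smul_sq, mul_pow, hw2]
    have := pow_le_pow_left₀ (h'.nonneg 1) (h'.antitone zero_le_one) 2
    nlinarith [sq_nonneg a, sq_nonneg b]
  have hup : ‖T' w‖ ≤ (σ 1 + ‖T - T'‖) * ‖w‖ := by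
    have := T'.norm_apply_le_add T w
    rw [norm_sub_rev] at this
    linarith [h.norm_apply_le_of_inner_eq_zero hw]
  have hδ := norm_nonneg (T - T')
  have hσ1 := h.nonneg 1
  refine le_of_mul_le_mul_right (le_of_pow_le_pow_left₀ two_ne_zero ?_ (hlow.trans ?_)) hwpos
  · positivity
  · exact pow_le_pow_left₀ (norm_nonneg _) hup 2

theorem norm_sub_inner_smul_sq_le (h : IsSingularSystem T σ e f)
    (h' : IsSingularSystem T' σ' e' f') (hgap : σ 1 < σ 0) (hδ : 2 * ‖T - T'‖ ≤ σ 0 - σ 1) :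
    ‖e 0 - ⟪e' 0, e 0⟫ • e' 0‖ ^ 2 ≤
      (σ 0 ^ 2 - (σ 0 - 2 * ‖T - T'‖) ^ 2) / (σ 0 ^ 2 - σ 1 ^ 2) := by
  set δ := ‖T - T'‖
  set r := ⟪e' 0, e 0⟫
  set x := e 0 - r • e' 0
  have hσ1 := h.nonneg 1
  have hδ0 : 0 ≤ δ := norm_nonneg _
  have hxorth : ⟪e' 0, x⟫ = 0 := by
    rw [inner_sub_right, real_inner_smul_right, real_inner_self_eq_norm_sq,
      h'.orthonormal_left.1, one_pow, mul_one, sub_self]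
  have hrx : r ^ 2 + ‖x‖ ^ 2 = 1 := by
    rw [norm_sub_inner_smul_sq (h'.orthonormal_left.1 0), h.orthonormal_left.1]
    ring
  have hpyth : ‖T' (e 0)‖ ^ 2 = (σ' 0 * r) ^ 2 + ‖T' x‖ ^ 2 := by
    have hsplit : T' (e 0) = (σ' 0 * r) • f' 0 + T' x := by
      rw [mul_comm, ← smul_smul, ← h'.apply_eq, ← map_smul, ← map_add, add_sub_cancel]
    rw [hsplit, @norm_add_sq_real, real_inner_smul_left, h'.inner_apply, hxorth, norm_smul,
      h'.orthonormal_right.1, mul_one, Real.norm_eq_abs, sq_abs]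
    ring
  have hchain : (σ 0 - δ) ^ 2 ≤ (σ 0 + δ) ^ 2 * (1 - ‖x‖ ^ 2) + (σ 1 + δ) ^ 2 * ‖x‖ ^ 2 := by
    calc (σ 0 - δ) ^ 2 ≤ ‖T' (e 0)‖ ^ 2 :=
          pow_le_pow_left₀ (by linarith) (h.sub_le_norm_apply T') 2
      _ = σ' 0 ^ 2 * r ^ 2 + ‖T' x‖ ^ 2 := by rw [hpyth, mul_pow]
      _ ≤ (σ 0 + δ) ^ 2 * r ^ 2 + ((σ 1 + δ) * ‖x‖) ^ 2 := by
          gcongr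
          · exact h'.nonneg 0
          · exact h.sigma_zero_le_add h'
          · exact (h'.norm_apply_le_of_inner_eq_zero hxorth).trans
              (mul_le_mul_of_nonneg_right (h.sigma_one_le_add h') (norm_nonneg x))
      _ = _ := by rw [mul_pow, ← hrx]; ring
  rw [le_div_iff₀ (by nlinarith)]
  exact mul_sq_sub_sq_le_of_sq_sub_le hσ1 hgap hδ0 hδ hchain

theorem norm_svdTail_succ_sub_le (h : IsSingularSystem T σ e f)
    (h' : IsSingularSystem T' σ' e' f') (j : ℕ) :
    ‖svdTail T σ e f (j + 1) - svdTail T' σ' e' f' (j + 1)‖ ≤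
      2 * ‖svdTail T σ e f j - svdTail T' σ' e' f' j‖ +
        (‖svdTail T σ e f j‖ + ‖svdTail T σ e f j - svdTail T' σ' e' f' j‖) *
          (2 * ‖e j - ⟪e' j, e j⟫ • e' j‖) := by
  set A := svdTail T σ e f j
  set A' := svdTail T' σ' e' f' j
  set P := rankOne ℝ (e j) (e j)
  set P' := rankOne ℝ (e' j) (e' j)
  have hP : ‖P‖ = 1 := by simp [P, h.orthonormal_left.1]
  have hA' : ‖A'‖ ≤ ‖A‖ + ‖A - A'‖ := norm_sub_rev A A' ▸ norm_le_norm_add_norm_sub' A' A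
  have hPP' : ‖P - P'‖ ≤ 2 * ‖e j - ⟪e' j, e j⟫ • e' j‖ :=
    norm_rankOne_self_sub_le (h.orthonormal_left.1 j) (h'.orthonormal_left.1 j)
  rw [h.svdTail_succ, h'.svdTail_succ]
  calc ‖A - A ∘L P - (A' - A' ∘L P')‖ = ‖(A - A') - (A - A') ∘L P - A' ∘L (P - P')‖ := by
        congr 1; ext; simp only [sub_apply, comp_apply, sub_comp, comp_sub]; abel
    _ ≤ ‖A - A'‖ + ‖A - A'‖ * ‖P‖ + ‖A'‖ * ‖P - P'‖ := by
        grw [norm_sub_le, norm_sub_le, opNorm_comp_le, opNorm_comp_le]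
    _ ≤ _ := by
        rw [hP]
        gcongr
        linarith

end IsSingularSystem

theorem IsCompactOperator.nonneg_of_apply_eq {T : E →L[ℝ] F} {σ : ℕ → ℝ} {e : ℕ → E}
    {f : ℕ → F} (hT : IsCompactOperator T) (he : Orthonormal ℝ e) (hf : Orthonormal ℝ f)
    (happ : ∀ k, T (e k) = σ k • f k) (hσ : Antitone σ) (k : ℕ) : 0 ≤ σ k := by
  by_contra! hneg
  obtain ⟨K, hK, hTK⟩ := hT.image_closedBall_subset_compact 1
  refine (hf.comp _ (add_left_injective k)).not_forall_smul_mem (c := fun i => σ (i + k))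
    (neg_pos.mpr hneg) (fun i => ?_) hK (fun i => ?_)
  · have := hσ (Nat.le_add_left k i)
    rw [abs_of_neg (by linarith)]
    linarith
  · rw [Function.comp_apply, ← happ]
    exact hTK ⟨e (i + k), by simp [he.1], rfl⟩

theorem IsSingularSystem.of_isCompactOperator {T : E →L[ℝ] F} {σ : ℕ → ℝ} {e : ℕ → E}
    {f : ℕ → F} (hT : IsCompactOperator T) (he : Orthonormal ℝ e) (hf : Orthonormal ℝ f)
    (hσ : Antitone σ) (hsum : ∀ g, HasSum (fun k => σ k • ⟪e k, g⟫ • f k) (T g)) :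
    IsSingularSystem T σ e f :=
  ⟨he, hf, hσ, hT.nonneg_of_apply_eq he hf (he.apply_eq_of_hasSum hsum) hσ, hsum⟩

theorem norm_adjoint_svdTail_sub [CompleteSpace E] [CompleteSpace F] {T T' : E →L[ℝ] F}
    {σ σ' : ℕ → ℝ} {e e' : ℕ → E} {f f' : ℕ → F} (j : ℕ) :
    ‖svdTail (adjoint T) σ f e j - svdTail (adjoint T') σ' f' e' j‖ =
      ‖svdTail T σ e f j - svdTail T' σ' e' f' j‖ := by
  rw [← adjoint_svdTail, ← adjoint_svdTail, ← map_sub, LinearIsometryEquiv.norm_map]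

namespace IsSingularSystem

variable {T : E →L[ℝ] F} {Tm : ℕ → E →L[ℝ] F} {σ : ℕ → ℝ} {e : ℕ → E} {f : ℕ → F}
  {σm : ℕ → ℕ → ℝ} {em : ℕ → ℕ → E} {fm : ℕ → ℕ → F}

theorem eventually_norm_sub_inner_smul_sq_le (h : IsSingularSystem T σ e f)
    (hm : ∀ m, IsSingularSystem (Tm m) (σm m) (em m) (fm m)) (hσ : StrictAnti σ) (j : ℕ)
    (hj : Tendsto (fun m => ‖svdTail T σ e f j - svdTail (Tm m) (σm m) (em m) (fm m) j‖)
      atTop (𝓝 0)) :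
    ∀ᶠ m in atTop, ‖e j - ⟪em m j, e j⟫ • em m j‖ ^ 2 ≤
      (σ j ^ 2 - (σ j - 2 * ‖svdTail T σ e f j - svdTail (Tm m) (σm m) (em m) (fm m) j‖) ^ 2) /
        (σ j ^ 2 - σ (j + 1) ^ 2) := by
  have hgap := hσ (Nat.lt_add_one j)
  filter_upwards [hj.eventually (eventually_le_nhds (half_pos (sub_pos.mpr hgap)))] with m hδ
  exact (h.tail j).norm_sub_inner_smul_sq_le ((hm m).tail j) hgap (by rw [add_zero]; linarith)

theorem tendsto_norm_sub_inner_smul (h : IsSingularSystem T σ e f)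
    (hm : ∀ m, IsSingularSystem (Tm m) (σm m) (em m) (fm m)) (hσ : StrictAnti σ) (j : ℕ)
    (hj : Tendsto (fun m => ‖svdTail T σ e f j - svdTail (Tm m) (σm m) (em m) (fm m) j‖)
      atTop (𝓝 0)) :
    Tendsto (fun m => ‖e j - ⟪em m j, e j⟫ • em m j‖) atTop (𝓝 0) := by
  have hbound := ((tendsto_const_nhds (x := σ j ^ 2)).sub
    (((tendsto_const_nhds (x := σ j)).sub (hj.const_mul 2)).pow 2)).div_const
      (σ j ^ 2 - σ (j + 1) ^ 2)
  simp only [mul_zero, sub_zero, sub_self, zero_div] at hbound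
  have hsq := tendsto_of_tendsto_of_tendsto_of_le_of_le' tendsto_const_nhds hbound
    (Eventually.of_forall fun m => sq_nonneg _)
    (h.eventually_norm_sub_inner_smul_sq_le hm hσ j hj)
  simpa [Real.sqrt_sq_eq_abs] using hsq.sqrt

theorem tendsto_norm_svdTail_sub (h : IsSingularSystem T σ e f)
    (hm : ∀ m, IsSingularSystem (Tm m) (σm m) (em m) (fm m)) (hσ : StrictAnti σ)
    (hconv : Tendsto (fun m => ‖Tm m - T‖) atTop (𝓝 0)) (j : ℕ) :
    Tendsto (fun m => ‖svdTail T σ e f j - svdTail (Tm m) (σm m) (em m) (fm m) j‖)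
      atTop (𝓝 0) := by
  induction j with
  | zero => simpa [svdTail_zero, norm_sub_rev] using hconv
  | succ j ih =>
    have hx := h.tendsto_norm_sub_inner_smul hm hσ j ih
    have hlim := (ih.const_mul 2).add
      ((tendsto_const_nhds (x := ‖svdTail T σ e f j‖)).add ih |>.mul (hx.const_mul 2))
    simp only [mul_zero, add_zero] at hlim
    exact squeeze_zero (fun m => norm_nonneg _) (fun m => h.norm_svdTail_succ_sub_le (hm m) j) hlim

theorem tendsto_singular_vectors [CompleteSpace E] [CompleteSpace F]
    (h : IsSingularSystem T σ e f) (hm : ∀ m, IsSingularSystem (Tm m) (σm m) (em m) (fm m))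
    (hσ : StrictAnti σ) (hconv : Tendsto (fun m => ‖Tm m - T‖) atTop (𝓝 0)) (j : ℕ) :
    ((∀ᶠ m in atTop, ‖e j - ⟪em m j, e j⟫ • em m j‖ ^ 2 ≤
        (σ j ^ 2 - (σ j - 2 * ‖svdTail T σ e f j - svdTail (Tm m) (σm m) (em m) (fm m) j‖) ^ 2) /
          (σ j ^ 2 - σ (j + 1) ^ 2)) ∧
      Tendsto (fun m => ‖e j - ⟪em m j, e j⟫ • em m j‖) atTop (𝓝 0)) ∧
    ((∀ᶠ m in atTop, ‖f j - ⟪fm m j, f j⟫ • fm m j‖ ^ 2 ≤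
        (σ j ^ 2 - (σ j - 2 * ‖svdTail T σ e f j - svdTail (Tm m) (σm m) (em m) (fm m) j‖) ^ 2) /
          (σ j ^ 2 - σ (j + 1) ^ 2)) ∧
      Tendsto (fun m => ‖f j - ⟪fm m j, f j⟫ • fm m j‖) atTop (𝓝 0)) := by
  have hδ := h.tendsto_norm_svdTail_sub hm hσ hconv j
  have hδ' : Tendsto (fun m => ‖svdTail (ContinuousLinearMap.adjoint T) σ f e j -
      svdTail (ContinuousLinearMap.adjoint (Tm m)) (σm m) (fm m) (em m) j‖) atTop (𝓝 0) := by
    simpa only [norm_adjoint_svdTail_sub] using hδ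
  have hadj := fun m => (hm m).adjoint
  refine ⟨⟨h.eventually_norm_sub_inner_smul_sq_le hm hσ j hδ,
    h.tendsto_norm_sub_inner_smul hm hσ j hδ⟩, ?_,
    h.adjoint.tendsto_norm_sub_inner_smul hadj hσ j hδ'⟩
  simpa only [norm_adjoint_svdTail_sub] using
    h.adjoint.eventually_norm_sub_inner_smul_sq_le hadj hσ j hδ'

end IsSingularSystem

end Hilbert

theorem singular_vector_convergence_general
    {H : Type*} [NormedAddCommGroup H] [InnerProductSpace ℝ H] [CompleteSpace H] {n : ℕ}
    (Hop : Fock (EuclideanSpace ℝ (Fin n)) n →L[ℝ] Fock H n)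
    (Hm : ℕ → (Fock (EuclideanSpace ℝ (Fin n)) n →L[ℝ] Fock H n))
    (hcompact : ∀ m, IsCompactOperator (Hm m))
    (hconv : Tendsto (fun m => ‖Hm m - Hop‖) atTop (𝓝 0))
    -- singular value decomposition of `H`, with positive non-degenerate singular values
    (σ : ℕ → ℝ) (e : ℕ → Fock (EuclideanSpace ℝ (Fin n)) n) (f : ℕ → Fock H n)
    (he : Orthonormal ℝ e) (hf : Orthonormal ℝ f)
    (hσpos : ∀ k, 0 < σ k) (hσ : StrictAnti σ)
    (hSVD : ∀ g, HasSum (fun k => σ k • (inner ℝ (e k) g : ℝ) • f k) (Hop g))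
    -- singular value decompositions of the `H(m)`, singular values ordered decreasingly
    (σm : ℕ → ℕ → ℝ) (em : ℕ → ℕ → Fock (EuclideanSpace ℝ (Fin n)) n)
    (fm : ℕ → ℕ → Fock H n)
    (hem : ∀ m, Orthonormal ℝ (em m)) (hfm : ∀ m, Orthonormal ℝ (fm m))
    (hσm : ∀ m, Antitone (σm m))
    (hSVDm : ∀ m g, HasSum (fun k => σm m k • (inner ℝ (em m k) g : ℝ) • fm m k) (Hm m g)) :
    ∀ j : ℕ,
      ((∀ᶠ m in atTop,
        ‖e j - (inner ℝ (em m j) (e j) : ℝ) • em m j‖ ^ 2 ≤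
          (σ j ^ 2 - (σ j -
            2 * ‖(Hop - ∑ k ∈ Finset.range j, σ k • (innerSL ℝ (e k)).smulRight (f k)) -
              (Hm m - ∑ k ∈ Finset.range j,
                σm m k • (innerSL ℝ (em m k)).smulRight (fm m k))‖) ^ 2) /
            (σ j ^ 2 - σ (j + 1) ^ 2)) ∧
        Tendsto (fun m => ‖e j - (inner ℝ (em m j) (e j) : ℝ) • em m j‖) atTop (𝓝 0)) ∧
      ((∀ᶠ m in atTop,
        ‖f j - (inner ℝ (fm m j) (f j) : ℝ) • fm m j‖ ^ 2 ≤
          (σ j ^ 2 - (σ j -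
            2 * ‖(Hop - ∑ k ∈ Finset.range j, σ k • (innerSL ℝ (e k)).smulRight (f k)) -
              (Hm m - ∑ k ∈ Finset.range j,
                σm m k • (innerSL ℝ (em m k)).smulRight (fm m k))‖) ^ 2) /
            (σ j ^ 2 - σ (j + 1) ^ 2)) ∧
        Tendsto (fun m => ‖f j - (inner ℝ (fm m j) (f j) : ℝ) • fm m j‖) atTop (𝓝 0)) := by
  intro j
  have hsys : IsSingularSystem Hop σ e f := ⟨he, hf, hσ.antitone, fun k => (hσpos k).le, hSVD⟩
  have hsysm m : IsSingularSystem (Hm m) (σm m) (em m) (fm m) :=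
    .of_isCompactOperator (hcompact m) (hem m) (hfm m) (hσm m) (hSVDm m)
  exact hsys.tendsto_singular_vectors hsysm hσ hconv j

/-- If a family of compact operators `H(m)` converges in operator norm to
the Hankel operator `H`, whose singular values are all positive and non-degenerate, then the
singular vectors of `H(m)` converge in norm to those of `H`, with the quantitative bound
`‖x_j(m)‖² ≤ (σ_j² − (σ_j − 2‖H_j − H_j(m)‖)²)/(σ_j² − σ_{j+1}²)` holding for `m` large
enough, where `x_j(m)` is the component of `e_j` orthogonal to `e_j(m)`; and analogously
for the vectors `f_j`. -/
theorem singular_vector_convergence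
    {H : Type*} [NormedAddCommGroup H] [InnerProductSpace ℝ H] [CompleteSpace H]
    [TopologicalSpace.SeparableSpace H] {n : ℕ}
    (Hop : Fock (EuclideanSpace ℝ (Fin n)) n →L[ℝ] Fock H n)
    (Hm : ℕ → (Fock (EuclideanSpace ℝ (Fin n)) n →L[ℝ] Fock H n))
    (hcompact : ∀ m, IsCompactOperator (Hm m))
    (hconv : Tendsto (fun m => ‖Hm m - Hop‖) atTop (𝓝 0))
    -- singular value decomposition of `H`, with positive non-degenerate singular values
    (σ : ℕ → ℝ) (e : ℕ → Fock (EuclideanSpace ℝ (Fin n)) n) (f : ℕ → Fock H n)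
    (he : Orthonormal ℝ e) (hf : Orthonormal ℝ f)
    (hσpos : ∀ k, 0 < σ k) (hσ : StrictAnti σ)
    (hSVD : ∀ g, HasSum (fun k => σ k • (inner ℝ (e k) g : ℝ) • f k) (Hop g))
    -- singular value decompositions of the `H(m)`, singular values ordered decreasingly
    (σm : ℕ → ℕ → ℝ) (em : ℕ → ℕ → Fock (EuclideanSpace ℝ (Fin n)) n)
    (fm : ℕ → ℕ → Fock H n)
    (hem : ∀ m, Orthonormal ℝ (em m)) (hfm : ∀ m, Orthonormal ℝ (fm m))
    (hσm : ∀ m, Antitone (σm m))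
    (hSVDm : ∀ m g, HasSum (fun k => σm m k • (inner ℝ (em m k) g : ℝ) • fm m k) (Hm m g)) :
    ∀ j : ℕ,
      ((∀ᶠ m in atTop,
        ‖e j - (inner ℝ (em m j) (e j) : ℝ) • em m j‖ ^ 2 ≤
          (σ j ^ 2 - (σ j -
            2 * ‖(Hop - ∑ k ∈ Finset.range j, σ k • (innerSL ℝ (e k)).smulRight (f k)) -
              (Hm m - ∑ k ∈ Finset.range j,
                σm m k • (innerSL ℝ (em m k)).smulRight (fm m k))‖) ^ 2) /
            (σ j ^ 2 - σ (j + 1) ^ 2)) ∧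
        Tendsto (fun m => ‖e j - (inner ℝ (em m j) (e j) : ℝ) • em m j‖) atTop (𝓝 0)) ∧
      ((∀ᶠ m in atTop,
        ‖f j - (inner ℝ (fm m j) (f j) : ℝ) • fm m j‖ ^ 2 ≤
          (σ j ^ 2 - (σ j -
            2 * ‖(Hop - ∑ k ∈ Finset.range j, σ k • (innerSL ℝ (e k)).smulRight (f k)) -
              (Hm m - ∑ k ∈ Finset.range j,
                σm m k • (innerSL ℝ (em m k)).smulRight (fm m k))‖) ^ 2) /
            (σ j ^ 2 - σ (j + 1) ^ 2)) ∧
        Tendsto (fun m => ‖f j - (inner ℝ (fm m j) (f j) : ℝ) • fm m j‖) atTop (𝓝 0)) :=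
  singular_vector_convergence_general Hop Hm hcompact hconv σ e f he hf hσpos hσ hSVD σm em fm hem
    hfm hσm hSVDm

end
end

section
/- The Volterra kernels satisfy the following invariance property of the mixed L¹–L² norm: for all p, q, k, j ∈ ℕ₀ with p + q = k + j, ‖h_{k,j}‖_{L¹_{k+1} L²_{k+j}(HS((ℝⁿ)^{⊗(j+1)}, 𝓗 ⊗ (ℝⁿ)^{⊗k}))} = ‖h_{p,q}‖_{L¹_{k+1} L²_{k+j}(HS((ℝⁿ)^{⊗(q+1)}, 𝓗 ⊗ (ℝⁿ)^{⊗p}))}. -/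
open MeasureTheory ContinuousLinearMap Filter
open scoped ENNReal NNReal Topology RealInnerProductSpace

noncomputable section

section kernels

variable {X H : Type*} [NormedAddCommGroup X] [InnerProductSpace ℝ X] [CompleteSpace X]
  [NormedAddCommGroup H] [InnerProductSpace ℝ H] [CompleteSpace H] {n : ℕ}

/-- The Volterra kernel `h_{k,j}`, as a Hilbert–Schmidt tensor valued function of
`k+j+1` positive time variables; the component at `(i, β)` is
`O_k(t₀,…,t_k) P_j^*(t_{k+j},…,t_{k+1},0) (ψ_i ⊗ ê_β)`. -/
def volterraKernel (T : ℝ → X →L[ℝ] X) (N : Fin n → X →L[ℝ] X) (C : X →L[ℝ] H)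
    (ψ : Fin n → X) (k j : ℕ) (t : Fin (k + j + 1) → ℝ) :
    PiLp 2 (fun _ : Fin n × (Fin j → Fin n) => Tens H n k) := WithLp.toLp 2 fun p =>
  Ok T N C k (fun i : Fin (k + 1) => t ⟨i, by omega⟩)
    (adjoint (Pk T N j (fun i : Fin (j + 1) =>
        if (i : ℕ) = j then 0 else t ⟨k + j - (i : ℕ), by omega⟩))
      (WithLp.toLp 2 (fun β : Fin j → Fin n => if β = p.2 then ψ p.1 else 0) : Tens X n j))

/-- The mixed `L¹_i L²_m` norm of a function of `m+1` positive variables: the `L¹` norm is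
taken in the variable at position `i` and the `L²` norm in the remaining `m` variables. -/
def mixedL1L2 {m : ℕ} {E : Type*} [NormedAddCommGroup E] (i : Fin (m + 1))
    (f : (Fin (m + 1) → ℝ) → E) : ℝ≥0∞ :=
  ∫⁻ s in Set.Ioi (0 : ℝ),
    (∫⁻ y in posOrthant m, ((‖f (i.insertNth s y)‖₊ : ℝ≥0∞)) ^ 2) ^ (1 / 2 : ℝ)

/-- The `𝓗²` Hardy norm of a function of `k` complex variables on the product of right
half-planes. -/
def hardyH2 {k : ℕ} {E : Type*} [NormedAddCommGroup E] (F : (Fin k → ℂ) → E) : ℝ≥0∞ :=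
  ⨆ x : Fin k → ℝ,
    ENNReal.ofReal ((2 * Real.pi) ^ (-(k : ℝ) / 2)) *
      (∫⁻ y in posOrthant k,
        ((‖F (fun i => (x i : ℂ) + (y i : ℂ) * Complex.I)‖₊ : ℝ≥0∞)) ^ 2) ^ (1 / 2 : ℝ)

/-- The mixed `𝓗^∞_i 𝓗²_k` Hardy norm of a function of `k+1` complex variables: the sup is
taken over the variable at position `i` ranging over the right half-plane, and the `𝓗²` norm
over the remaining `k` variables. -/
def mixedHardy {k : ℕ} {E : Type*} [NormedAddCommGroup E] (i : Fin (k + 1))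
    (F : (Fin (k + 1) → ℂ) → E) : ℝ≥0∞ :=
  ⨆ s ∈ {z : ℂ | 0 < z.re}, hardyH2 fun y => F (i.insertNth s y)

/-- The `k`-th order transfer function `G_k(s) = ∫_{(0,∞)^{k+1}} h_{k,0}(t) e^{-⟨s,t⟩} dt`,
with values in the complexification of the Hilbert space of Hilbert–Schmidt tensors
(first component: real part; second component: imaginary part). -/
def transferFn (T : ℝ → X →L[ℝ] X) (N : Fin n → X →L[ℝ] X) (C : X →L[ℝ] H)
    (ψ : Fin n → X) (k : ℕ) (s : Fin (k + 1) → ℂ) :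
    WithLp 2 ((PiLp 2 fun _ : Fin n × (Fin 0 → Fin n) => Tens H n k) ×
      (PiLp 2 fun _ : Fin n × (Fin 0 → Fin n) => Tens H n k)) :=
  (WithLp.equiv 2 _).symm
    (∫ t in posOrthant (k + 1),
        (Real.exp (-∑ i, (s i).re * t i) * Real.cos (∑ i, (s i).im * t i)) •
          volterraKernel T N C ψ k 0 t,
     ∫ t in posOrthant (k + 1),
        (-(Real.exp (-∑ i, (s i).re * t i) * Real.sin (∑ i, (s i).im * t i))) •
          volterraKernel T N C ψ k 0 t)

end kernels

/-! Since `T(0) = 1`, the adjoint of `P_j(t_{k+j},…,t_{k+1},0)` is the chain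
`N T(t_{k+1}) ⋯ N T(t_{k+j})` that completes `O_k(t₀,…,t_k)` to a chain of length `k + j`.
So the components of `h_{k,j}(t)` are the vectors
`C T(t₀) N_{γ₁} T(t₁) ⋯ N_{γ_{k+j}} T(t_{k+j}) ψ_i`, where `γ` runs over the concatenations
of an output multi-index with a reversed input multi-index, i.e. over all of
`Fin (k + j) → Fin n`. Hence `h_{k,j}` and `h_{k+j,0}` have the same pointwise
Hilbert–Schmidt norm, and therefore the same mixed norms. -/

theorem star_list_prod {R : Type*} [Monoid R] [StarMul R] (l : List R) :
    star l.prod = (l.map star).reverse.prod :=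
  unop_map_list_prod (starMulEquiv (R := R)) l

theorem List.reverse_ofFn {α : Type*} {m : ℕ} (f : Fin m → α) :
    (List.ofFn f).reverse = List.ofFn fun i => f i.rev := by
  rw [List.ofFn_eq_map, List.ofFn_eq_map, ← List.map_reverse, List.finRange_reverse,
    List.map_map]
  rfl

theorem Fintype.sum_append_rev {α M : Type*} [Fintype α] [AddCommMonoid M]
    {k j : ℕ} (g : (Fin (k + j) → α) → M) :
    ∑ β : Fin j → α, ∑ a : Fin k → α, g (Fin.append a (β ∘ Fin.rev)) = ∑ γ, g γ := by
  rw [Finset.sum_comm, ← Fintype.sum_prod_type']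
  exact Fintype.sum_equiv ((Equiv.prodCongr (Equiv.refl _)
    (Equiv.arrowCongr Fin.revPerm (Equiv.refl α))).trans (Fin.appendEquiv k j)) _ _
    fun _ => rfl

section chains

variable {X : Type*} [NormedAddCommGroup X] [InnerProductSpace ℝ X] {n : ℕ}
  (T : ℝ → X →L[ℝ] X) (N : Fin n → X →L[ℝ] X)

theorem Ochain_append {k j : ℕ} (t : Fin (k + j + 1) → ℝ) (α : Fin k → Fin n)
    (β : Fin j → Fin n) :
    Ochain T N t (Fin.append α β) =
      Ochain T N (fun i : Fin (k + 1) => t ⟨i, by omega⟩) α *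
        (List.ofFn fun r : Fin j => N (β r) * T (t (Fin.natAdd k r).succ)).prod := by
  rw [Ochain, Ochain, List.ofFn_add, List.prod_append, ← mul_assoc]
  congr 2
  · exact congrArg List.prod (List.ofFn_inj.2 (funext fun i =>
      congrArg₂ (· * ·) (congrArg N (Fin.append_left α β i)) rfl))
  · exact List.ofFn_inj.2 (funext fun r =>
      congrArg₂ (· * ·) (congrArg N (Fin.append_right α β r)) rfl)

variable [CompleteSpace X]

theorem adjoint_Pchain {j : ℕ} (s : Fin (j + 1) → ℝ) (β : Fin j → Fin n) :
    adjoint (Pchain T N s β) =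
      T (s (Fin.last j)) *
        (List.ofFn fun r : Fin j => N (β r.rev) * T (s r.rev.castSucc)).prod := by
  simp only [Pchain, ← star_eq_adjoint, star_mul, star_star, star_list_prod, List.map_ofFn,
    List.reverse_ofFn, Function.comp_def]

theorem Ochain_append_rev (hT0 : T 0 = 1) {k j : ℕ} (t : Fin (k + j + 1) → ℝ)
    (α : Fin k → Fin n) (β : Fin j → Fin n) :
    Ochain T N t (Fin.append α (β ∘ Fin.rev)) =
      Ochain T N (fun i : Fin (k + 1) => t ⟨i, by omega⟩) α *
        adjoint (Pchain T N (fun i : Fin (j + 1) =>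
          if (i : ℕ) = j then 0 else t ⟨k + j - i, by omega⟩) β) := by
  rw [Ochain_append, adjoint_Pchain]
  simp only [Fin.val_last, if_pos, hT0, one_mul]
  congr 3
  ext1 r
  have hr := r.isLt
  rw [if_neg (by simp [Fin.val_rev]; omega)]
  exact congrArg₂ (· * ·) rfl (congrArg T (congrArg t (Fin.ext (by simp [Fin.val_rev]; omega))))

theorem adjoint_Pk_apply_single {j : ℕ} (s : Fin (j + 1) → ℝ) (β : Fin j → Fin n) (v : X) :
    adjoint (Pk T N j s) (WithLp.toLp 2 fun β' => if β' = β then v else 0) =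
      adjoint (Pchain T N s β) v := by
  refine ext_inner_right ℝ fun x => ?_
  rw [adjoint_inner_left, adjoint_inner_left, PiLp.inner_apply]
  simp only [Pk]
  rw [Fintype.sum_eq_single β fun β' hβ' => by simp [hβ']]
  simp

end chains

section kernels

variable {X H : Type*} [NormedAddCommGroup X] [InnerProductSpace ℝ X] [CompleteSpace X]
  [NormedAddCommGroup H] [InnerProductSpace ℝ H] {n : ℕ}
  {T : ℝ → X →L[ℝ] X} (N : Fin n → X →L[ℝ] X) (C : X →L[ℝ] H) (ψ : Fin n → X)

theorem volterraKernel_apply (hT0 : T 0 = 1) {k j : ℕ} (t : Fin (k + j + 1) → ℝ)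
    (p : Fin n × (Fin j → Fin n)) (α : Fin k → Fin n) :
    volterraKernel T N C ψ k j t p α =
      C (Ochain T N t (Fin.append α (p.2 ∘ Fin.rev)) (ψ p.1)) := by
  rw [Ochain_append_rev T N hT0, mul_apply_eq_comp, ← adjoint_Pk_apply_single]
  rfl

theorem norm_volterraKernel_sq (hT0 : T 0 = 1) {k j : ℕ} (t : Fin (k + j + 1) → ℝ) :
    ‖volterraKernel T N C ψ k j t‖ ^ 2 =
      ∑ i, ∑ γ : Fin (k + j) → Fin n, ‖C (Ochain T N t γ (ψ i))‖ ^ 2 := by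
  simp only [PiLp.norm_sq_eq_of_L2, volterraKernel_apply N C ψ hT0, Fintype.sum_prod_type]
  exact Finset.sum_congr rfl fun i _ =>
    Fintype.sum_append_rev fun γ => ‖C (Ochain T N t γ (ψ i))‖ ^ 2

theorem norm_volterraKernel_eq (hT0 : T 0 = 1) {k j : ℕ} (t : Fin (k + j + 1) → ℝ) :
    ‖volterraKernel T N C ψ k j t‖ = ‖volterraKernel T N C ψ (k + j) 0 t‖ := by
  rw [← sq_eq_sq₀ (norm_nonneg _) (norm_nonneg _), norm_volterraKernel_sq N C ψ hT0,
    norm_volterraKernel_sq N C ψ hT0]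
  rfl

end kernels

theorem mixedL1L2_congr_norm {m : ℕ} {E F : Type*} [NormedAddCommGroup E]
    [NormedAddCommGroup F] (i : Fin (m + 1)) {f : (Fin (m + 1) → ℝ) → E} {g : (Fin (m + 1) → ℝ) → F}
    (h : ∀ t, ‖f t‖ = ‖g t‖) : mixedL1L2 i f = mixedL1L2 i g := by
  have hnn : ∀ t, ‖f t‖₊ = ‖g t‖₊ := fun t => NNReal.eq (h t)
  simp only [mixedL1L2, hnn]

theorem mixedL1L2_congr_dim {E : ℕ → Type*} [∀ m, NormedAddCommGroup (E m)]
    (f : ∀ m : ℕ, (Fin (m + 1) → ℝ) → E m) {m m' : ℕ} (h : m = m') (i : Fin (m + 1))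
    (i' : Fin (m' + 1)) (hi : (i : ℕ) = i') : mixedL1L2 i (f m) = mixedL1L2 i' (f m') := by
  subst h
  rw [Fin.ext hi]

/-- The Volterra kernels satisfy the invariance property of the mixed
`L¹–L²` norm: for all `p, q, k, j` with `p + q = k + j`,
`‖h_{k,j}‖_{L¹_{k+1} L²_{k+j}} = ‖h_{p,q}‖_{L¹_{k+1} L²_{k+j}}`. -/
theorem volterra_kernel_mixed_norm_invariance
    {X H : Type*} [NormedAddCommGroup X] [InnerProductSpace ℝ X] [CompleteSpace X]
    [NormedAddCommGroup H] [InnerProductSpace ℝ H] {n : ℕ}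
    (T : ℝ → X →L[ℝ] X) (N : Fin n → X →L[ℝ] X) (ψ : Fin n → X) (C : X →L[ℝ] H)
    (M ν : ℝ) (hT : IsC0SemigroupWith T M ν) :
    ∀ (p q k j : ℕ) (hpq : p + q = k + j),
      mixedL1L2 (⟨k, by omega⟩ : Fin (k + j + 1)) (volterraKernel T N C ψ k j) =
        mixedL1L2 (⟨k, by omega⟩ : Fin (p + q + 1)) (volterraKernel T N C ψ p q) := by
  intro p q k j hpq
  have hT0 : T 0 = 1 := hT.2.2.1
  rw [mixedL1L2_congr_norm _ (norm_volterraKernel_eq N C ψ hT0),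
    mixedL1L2_congr_norm _ (norm_volterraKernel_eq N C ψ hT0)]
  -- `volterraKernel m 0` lives on `Fin (m + 0 + 1) → ℝ`, definitionally `Fin (m + 1) → ℝ`.
  exact mixedL1L2_congr_dim (fun m => volterraKernel T N C ψ m 0 : ∀ m, (Fin (m + 1) → ℝ) → _)
    hpq.symm ⟨k, by omega⟩ ⟨k, by omega⟩ rfl

end
end
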